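/- Let E be an arbitrary graph and I any ideal of the Leavitt path algebra L_K(E). Then I^⊥ = {a ∈ L_K(E) : ax = xa = 0 for all x ∈ I} is a ℤ-graded ideal. -/

import Mathlib

/-- A directed graph `E = (E⁰, E¹, r, s)`. -/
structure DGraph where
  V : Type
  E : Type
  src : E → V
  rng : E → V

namespace DGraph

/-- A graph is row-finite if every vertex emits finitely many edges. -/
def RowFinite (G : DGraph) : Prop := ∀ v : G.V, {e : G.E | G.src e = v}.Finite

/-- Generators of the Leavitt path algebra: vertices, edges, and ghost edges. -/
inductive LGen (G : DGraph) : Type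
  | v : G.V → LGen G
  | e : G.E → LGen G
  | g : G.E → LGen G

/-- The defining relations of the Leavitt path algebra. -/
inductive LRel (K : Type) [Field K] (G : DGraph) :
    FreeAlgebra K (LGen G) → FreeAlgebra K (LGen G) → Prop
  | vert_idem (u : G.V) :
      LRel K G (FreeAlgebra.ι K (LGen.v u) * FreeAlgebra.ι K (LGen.v u))
        (FreeAlgebra.ι K (LGen.v u))
  | vert_orth {u w : G.V} (h : u ≠ w) :
      LRel K G (FreeAlgebra.ι K (LGen.v u) * FreeAlgebra.ι K (LGen.v w)) 0
  | src_edge (e : G.E) :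
      LRel K G (FreeAlgebra.ι K (LGen.v (G.src e)) * FreeAlgebra.ι K (LGen.e e))
        (FreeAlgebra.ι K (LGen.e e))
  | edge_rng (e : G.E) :
      LRel K G (FreeAlgebra.ι K (LGen.e e) * FreeAlgebra.ι K (LGen.v (G.rng e)))
        (FreeAlgebra.ι K (LGen.e e))
  | rng_ghost (e : G.E) :
      LRel K G (FreeAlgebra.ι K (LGen.v (G.rng e)) * FreeAlgebra.ι K (LGen.g e))
        (FreeAlgebra.ι K (LGen.g e))
  | ghost_src (e : G.E) :
      LRel K G (FreeAlgebra.ι K (LGen.g e) * FreeAlgebra.ι K (LGen.v (G.src e)))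
        (FreeAlgebra.ι K (LGen.g e))
  | ck1 (e : G.E) :
      LRel K G (FreeAlgebra.ι K (LGen.g e) * FreeAlgebra.ι K (LGen.e e))
        (FreeAlgebra.ι K (LGen.v (G.rng e)))
  | ck1_orth {e f : G.E} (h : e ≠ f) :
      LRel K G (FreeAlgebra.ι K (LGen.g e) * FreeAlgebra.ι K (LGen.e f)) 0
  | ck2 (u : G.V) (S : Finset G.E) (hS : S.Nonempty) (hsrc : ∀ e : G.E, G.src e = u ↔ e ∈ S) :
      LRel K G (FreeAlgebra.ι K (LGen.v u))
        (∑ e ∈ S, FreeAlgebra.ι K (LGen.e e) * FreeAlgebra.ι K (LGen.g e))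

/-- The Leavitt path algebra of the graph `G` with coefficients in `K`, defined as the
universal `K`-algebra on the generators subject to the Leavitt path algebra relations. -/
def LPA (K : Type) [Field K] (G : DGraph) : Type := RingQuot (LRel K G)

instance (K : Type) [Field K] (G : DGraph) : Ring (LPA K G) :=
  inferInstanceAs (Ring (RingQuot (LRel K G)))

instance (K : Type) [Field K] (G : DGraph) : Algebra K (LPA K G) :=
  inferInstanceAs (Algebra K (RingQuot (LRel K G)))

variable (K : Type) [Field K] (G : DGraph)

/-- The image of a vertex in the Leavitt path algebra. -/
def vert (u : G.V) : LPA K G := RingQuot.mkAlgHom K (LRel K G) (FreeAlgebra.ι K (LGen.v u))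

/-- The image of an edge in the Leavitt path algebra. -/
def edge (e : G.E) : LPA K G := RingQuot.mkAlgHom K (LRel K G) (FreeAlgebra.ι K (LGen.e e))

/-- The image of a ghost edge in the Leavitt path algebra. -/
def ghost (e : G.E) : LPA K G := RingQuot.mkAlgHom K (LRel K G) (FreeAlgebra.ι K (LGen.g e))

/-- Finite paths in `G` from a vertex to a vertex; a trivial path at each vertex,
and `cons e p` follows the edge `e` and then the path `p`. -/
inductive Path (G : DGraph) : G.V → G.V → Type
  | nil (u : G.V) : Path G u u
  | cons (e : G.E) {w : G.V} (p : Path G (G.rng e) w) : Path G (G.src e) w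

/-- The length of a path. -/
def Path.length {G : DGraph} : ∀ {u w : G.V}, Path G u w → ℕ
  | _, _, .nil _ => 0
  | _, _, .cons _ p => p.length + 1

/-- The element of the Leavitt path algebra determined by a path (product of its edges). -/
def pathElem : ∀ {u w : G.V}, Path G u w → LPA K G
  | _, _, .nil v => vert K G v
  | _, _, .cons e p => edge K G e * pathElem p

/-- The element of the Leavitt path algebra determined by the adjoint (ghost) of a path. -/
def pathElemStar : ∀ {u w : G.V}, Path G u w → LPA K G
  | _, _, .nil v => vert K G v
  | _, _, .cons e p => pathElemStar p * ghost K G e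

/-- The homogeneous component of degree `n` of the canonical ℤ-grading of the
Leavitt path algebra: the span of elements `αβ*` with `|α| - |β| = n`. -/
def grade (n : ℤ) : Submodule K (LPA K G) :=
  Submodule.span K {x : LPA K G | ∃ (u u' w : G.V) (α : Path G u w) (β : Path G u' w),
    (α.length : ℤ) - (β.length : ℤ) = n ∧ x = pathElem K G α * pathElemStar K G β}

/-- A two-sided ideal `J` of the Leavitt path algebra is ℤ-graded if whenever a finite sum
`y = Σₙ yₙ` of homogeneous elements `yₙ` of degree `n` lies in `J`, each `yₙ` lies in `J`. -/
def IsGradedIdeal (J : TwoSidedIdeal (LPA K G)) : Prop :=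
  ∀ f : ℤ →₀ LPA K G, (∀ n : ℤ, f n ∈ grade K G n) →
    (f.sum fun _ x => x) ∈ J → ∀ n : ℤ, f n ∈ J

/-- The vertex set `H(I) = {v ∈ E⁰ : v ∈ I}` of an ideal `I`. -/
def vertSet (I : TwoSidedIdeal (LPA K G)) : Set G.V := {v : G.V | vert K G v ∈ I}

/-- The "closure" `H̄(I) = {s(α) : α ∈ E*, r(α) ∈ H(I)}` of the vertex set of an ideal. -/
def vertSetBar (I : TwoSidedIdeal (LPA K G)) : Set G.V :=
  {u : G.V | ∃ (w : G.V) (_ : Path G u w), vert K G w ∈ I}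

/-- The two-sided ideal of the Leavitt path algebra generated by a set of vertices. -/
def genIdeal (S : Set G.V) : TwoSidedIdeal (LPA K G) :=
  TwoSidedIdeal.span {x : LPA K G | ∃ v ∈ S, x = vert K G v}

/-- The two-sided annihilator of a subset. -/
def perpSet {A : Type*} [Ring A] (X : Set A) : Set A :=
  {a : A | ∀ x ∈ X, a * x = 0 ∧ x * a = 0}

/-- A subset `H ⊆ E⁰` is hereditary if `s(α) ∈ H` implies `r(α) ∈ H` for finite paths `α`. -/
def Hereditary (H : Set G.V) : Prop := ∀ (u w : G.V), Path G u w → u ∈ H → w ∈ H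

/-- A subset `H ⊆ E⁰` is saturated if every regular vertex all of whose emitted edges end
in `H` belongs to `H`. -/
def Saturated (H : Set G.V) : Prop :=
  ∀ (v : G.V) (S : Finset G.E), S.Nonempty → (∀ e : G.E, G.src e = v ↔ e ∈ S) →
    (∀ e ∈ S, G.rng e ∈ H) → v ∈ H

/-- The tree `T(w)` of a vertex `w` is contained in a set `X` iff every path from `w`
ends in `X`. -/
def TreeSubset (w : G.V) (X : Set G.V) : Prop := ∀ u : G.V, Path G w u → u ∈ X

end DGraph

/-!
Write `L = L_K(E)`. Its ℤ-grading is realised by the algebra map `z ↦ Σₙ zₙ tⁿ` into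
`L[t, t⁻¹]`, which makes `L` a `GradedAlgebra`. The theorem then rests on two facts.

`L` is graded semiprime: a homogeneous `c` with `c L c = 0` vanishes. In degree `d > 0`,
`c = Σ_{e ∈ F} e e^* c` for a finite set `F` of edges and each `e^* c` has degree `d - 1`;
negative degrees are symmetric. In degree `0` one inducts on the length of the monomials: the
shorter elements `e^* c f` vanish, which leaves `c = Σ_v λ_v v (1 - Σ_{e ∈ F} e e^*)`, a
combination of orthogonal idempotents, and these are killed by `c L c = 0`.

In a graded semiprime ring, `a L x = 0` forces `a_k L x_j = 0` for all homogeneous components.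
For `a ∈ I^⊥` and `x ∈ I` we have `a L x = 0`, hence `a_k x = 0`, and `x a_k = Σ_j x_j a_k = 0`
by semiprimeness once more.
-/

theorem Int.strong_decreasing_induction {P : ℤ → Prop} (base : ∃ n, ∀ m > n, P m)
    (step : ∀ n, (∀ m > n, P m) → P n) (n : ℤ) : P n := by
  obtain ⟨N, hN⟩ := base
  have key : ∀ k : ℕ, ∀ n, N < n + k → P n := by
    intro k
    induction k with
    | zero => simpa using hN
    | succ k ih => exact fun n _ => step n fun m hm => ih m (by omega)
  exact key (N - n + 1).toNat n (by omega)

open DGraph DirectSum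

def perpIdeal {A : Type*} [Ring A] (I : TwoSidedIdeal A) : TwoSidedIdeal A :=
  TwoSidedIdeal.mk' (perpSet (I : Set A)) (fun x _ => ⟨zero_mul x, mul_zero x⟩)
    (fun ha hb x hx => ⟨by rw [add_mul, (ha x hx).1, (hb x hx).1, add_zero],
      by rw [mul_add, (ha x hx).2, (hb x hx).2, add_zero]⟩)
    (fun ha x hx => ⟨by rw [neg_mul, (ha x hx).1, neg_zero],
      by rw [mul_neg, (ha x hx).2, neg_zero]⟩)
    (fun {a b} hb x hx => ⟨by rw [mul_assoc, (hb x hx).1, mul_zero],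
      by rw [← mul_assoc, (hb _ (I.mul_mem_right x a hx)).2]⟩)
    (fun {a b} ha x hx => ⟨by rw [mul_assoc, (ha _ (I.mul_mem_left b x hx)).1],
      by rw [← mul_assoc, (ha x hx).2, zero_mul]⟩)

lemma coe_perpIdeal {A : Type*} [Ring A] (I : TwoSidedIdeal A) :
    (perpIdeal I : Set A) = perpSet (I : Set A) :=
  Set.ext fun x => TwoSidedIdeal.mem_mk' _ _ _ _ _ _ x

section GradedSemiprime

variable {A σ : Type*} [Ring A] [SetLike σ A] [AddSubgroupClass σ A] (𝒜 : ℤ → σ) [GradedRing 𝒜]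

structure IsSemiprimeGradedIdeal (S : ℤ → σ) : Prop where
  mul_mem_left : ∀ {m n : ℤ} {a b : A}, a ∈ 𝒜 m → b ∈ S n → a * b ∈ S (m + n)
  mul_mem_right : ∀ {m n : ℤ} {a b : A}, a ∈ S m → b ∈ 𝒜 n → a * b ∈ S (m + n)
  eq_zero_of_mul_mul_self : ∀ {n : ℤ} {c : A}, c ∈ S n → (∀ r, c * r * c = 0) → c = 0

theorem mul_mul_eq_zero_of_forall_homogeneous {b c : A} (h : ∀ d, ∀ ρ ∈ 𝒜 d, b * ρ * c = 0)
    (r : A) : b * r * c = 0 := by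
  classical
  rw [← sum_support_decompose 𝒜 r, Finset.mul_sum, Finset.sum_mul]
  exact Finset.sum_eq_zero fun d _ => h d _ (SetLike.coe_mem _)

theorem coe_decompose_mul_mul [∀ (i : ℤ) (y : 𝒜 i), Decidable (y ≠ 0)] (a x : A) {d : ℤ} {ρ : A}
    (hρ : ρ ∈ 𝒜 d) (n : ℤ) :
    (decompose 𝒜 (a * ρ * x) n : A) = ∑ j ∈ (decompose 𝒜 x).support,
      decompose 𝒜 a (n - (d + j)) * ρ * decompose 𝒜 x j := by
  conv_lhs => rw [← sum_support_decompose 𝒜 x, Finset.mul_sum]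
  rw [← GradedRing.proj_apply, map_sum]
  refine Finset.sum_congr rfl fun j _ => ?_
  have hmem : ρ * decompose 𝒜 x j ∈ 𝒜 (d + j) := SetLike.mul_mem_graded hρ (SetLike.coe_mem _)
  rw [GradedRing.proj_apply]
  conv_lhs => rw [← sub_add_cancel n (d + j), mul_assoc,
    coe_decompose_mul_add_of_right_mem 𝒜 hmem]
  rw [mul_assoc]

theorem coe_decompose_finsuppSum {f : ℤ →₀ A} (hf : ∀ n, f n ∈ 𝒜 n) (k : ℤ) :
    (decompose 𝒜 (f.sum fun _ x => x) k : A) = f k := by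
  rw [Finsupp.sum, ← GradedRing.proj_apply, map_sum, Finset.sum_eq_single k]
  · exact decompose_of_mem_same 𝒜 (hf k)
  · intro n _ hn
    rw [GradedRing.proj_apply, decompose_of_mem_ne 𝒜 (hf n) hn]
  · intro hk
    rw [Finsupp.notMem_support_iff.mp hk, map_zero]

theorem coe_decompose_sub_decompose (a : A) (M k : ℤ) :
    (decompose 𝒜 (a - decompose 𝒜 a M) k : A) =
      if k = M then (0 : A) else (decompose 𝒜 a k : A) := by
  rw [decompose_sub, DirectSum.sub_apply, AddSubgroupClass.coe_sub]
  split_ifs with hk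
  · rw [hk, decompose_of_mem_same 𝒜 (SetLike.coe_mem _), sub_self]
  · rw [decompose_of_mem_ne 𝒜 (SetLike.coe_mem _) (Ne.symm hk), sub_zero]

theorem support_decompose_sub_decompose_subset [∀ (i : ℤ) (y : 𝒜 i), Decidable (y ≠ 0)]
    (a : A) (M : ℤ) :
    (decompose 𝒜 (a - decompose 𝒜 a M)).support ⊆ (decompose 𝒜 a).support.erase M := by
  intro k hk
  have hk' := (GradedRing.mem_support_iff 𝒜 _ k).mp hk
  rw [GradedRing.proj_apply, coe_decompose_sub_decompose] at hk'
  split_ifs at hk' with hkM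
  · exact absurd rfl hk'
  · exact Finset.mem_erase.mpr ⟨hkM, (GradedRing.mem_support_iff 𝒜 a k).mpr hk'⟩

variable {𝒜} {S : ℤ → σ} (hS : IsSemiprimeGradedIdeal 𝒜 S)
include hS

theorem IsSemiprimeGradedIdeal.mul_mul_eq_zero_swap {m j : ℤ} {b c : A} (hb : b ∈ S m)
    (hc : c ∈ 𝒜 j) (h : ∀ r, b * r * c = 0) (r : A) : c * r * b = 0 := by
  refine mul_mul_eq_zero_of_forall_homogeneous 𝒜 (fun d ρ hρ => ?_) r
  refine hS.eq_zero_of_mul_mul_self (hS.mul_mem_left (SetLike.mul_mem_graded hc hρ) hb)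
    fun s => ?_
  calc c * ρ * b * s * (c * ρ * b) = c * ρ * (b * s * c) * ρ * b := by simp only [mul_assoc]
    _ = 0 := by rw [h, mul_zero, zero_mul, zero_mul]

theorem IsSemiprimeGradedIdeal.top_mul_mul_decompose_eq_zero {a x : A} {M : ℤ}
    (haM : (decompose 𝒜 a M : A) ∈ S M) (htop : ∀ k, M < k → decompose 𝒜 a k = 0)
    (h : ∀ r, a * r * x = 0) (j : ℤ) (r : A) :
    decompose 𝒜 a M * r * decompose 𝒜 x j = 0 := by
  classical
  -- Descending induction on `j`. The component of `a ρ x` of degree `M + d + j` is `a_M ρ x_j`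
  -- plus terms `a_{M+j-i} ρ x_i`, which vanish for `i < j` and satisfy `x_i L a_M = 0` for `i > j`.
  set aM : A := (decompose 𝒜 a M : A)
  obtain ⟨N, hN⟩ := (decompose 𝒜 x).support.bddAbove
  refine Int.strong_decreasing_induction (P := fun j => ∀ r, aM * r * decompose 𝒜 x j = 0)
    ⟨N, fun j hj r => ?_⟩ (fun j IH => ?_) j r
  · rw [DFinsupp.notMem_support_iff.mp fun hj' => absurd (hN hj') (not_le.mpr hj),
      ZeroMemClass.coe_zero, mul_zero]
  refine mul_mul_eq_zero_of_forall_homogeneous 𝒜 fun d ρ hρ => ?_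
  refine hS.eq_zero_of_mul_mul_self
    (hS.mul_mem_right (hS.mul_mem_right haM hρ) (SetLike.coe_mem _)) fun s => ?_
  set t : ℤ → A := fun i => decompose 𝒜 a (M + j - i) * ρ * decompose 𝒜 x i
  have hsum : ∑ i ∈ (decompose 𝒜 x).support, t i * s * (aM * ρ * decompose 𝒜 x j) = 0 := by
    have h0 := coe_decompose_mul_mul 𝒜 a x hρ (M + d + j)
    rw [h ρ, decompose_zero, DirectSum.zero_apply, ZeroMemClass.coe_zero] at h0
    have ht : ∑ i ∈ (decompose 𝒜 x).support, t i = 0 := by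
      rw [h0]
      refine Finset.sum_congr rfl fun i _ => ?_
      simp only [t]
      rw [show M + d + j - (d + i) = M + j - i by ring]
    rw [← Finset.sum_mul, ← Finset.sum_mul, ht, zero_mul, zero_mul]
  rw [Finset.sum_eq_single j (fun i _ hij => ?_) (fun hj => ?_)] at hsum
  · simp only [t] at hsum
    rwa [add_sub_cancel_right] at hsum
  · rcases lt_or_gt_of_ne hij with hlt | hgt
    · simp only [t, htop (M + j - i) (by omega), ZeroMemClass.coe_zero, zero_mul]
    · have hswap := hS.mul_mul_eq_zero_swap haM (SetLike.coe_mem _) (IH i hgt) s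
      calc t i * s * (aM * ρ * decompose 𝒜 x j)
          = decompose 𝒜 a (M + j - i) * ρ * (decompose 𝒜 x i * s * aM) * ρ *
              decompose 𝒜 x j := by simp only [t, mul_assoc]
        _ = 0 := by rw [hswap, mul_zero, zero_mul, zero_mul]
  · simp [DFinsupp.notMem_support_iff.mp hj]

theorem IsSemiprimeGradedIdeal.decompose_mul_mul_decompose_eq_zero {a x : A}
    (ha : ∀ k, (decompose 𝒜 a k : A) ∈ S k) (h : ∀ r, a * r * x = 0) (k j : ℤ) (r : A) :
    decompose 𝒜 a k * r * decompose 𝒜 x j = 0 := by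
  classical
  suffices key : ∀ T : Finset ℤ, ∀ b : A, (decompose 𝒜 b).support ⊆ T →
      (∀ k, (decompose 𝒜 b k : A) ∈ S k) → (∀ r, b * r * x = 0) →
      ∀ k j r, (decompose 𝒜 b k : A) * r * decompose 𝒜 x j = 0 from
    key _ a subset_rfl ha h k j r
  intro T
  induction T using Finset.induction_on_max with
  | empty =>
    intro b hb _ _ k j r
    rw [DFinsupp.notMem_support_iff.mp fun hk => Finset.notMem_empty k (hb hk),
      ZeroMemClass.coe_zero, zero_mul, zero_mul]
  | insert M T hlt IH =>
    intro b hsupp hb h k j r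
    have htop : ∀ k, M < k → decompose 𝒜 b k = 0 := fun k hk =>
      DFinsupp.notMem_support_iff.mp fun hk' =>
        (Finset.mem_insert.mp (hsupp hk')).elim (fun hkM => hk.ne' hkM)
          fun hkT => lt_asymm hk (hlt k hkT)
    have hM := hS.top_mul_mul_decompose_eq_zero (hb M) htop h
    have hM' : ∀ r, (decompose 𝒜 b M : A) * r * x = 0 := fun r => by
      rw [← sum_support_decompose 𝒜 x, Finset.mul_sum]
      exact Finset.sum_eq_zero fun j _ => hM j r
    have IH' := IH (b - decompose 𝒜 b M)
      (fun k hk => by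
        have hk' := support_decompose_sub_decompose_subset 𝒜 b M hk
        exact (Finset.mem_insert.mp (hsupp (Finset.mem_of_mem_erase hk'))).resolve_left
          (Finset.ne_of_mem_erase hk'))
      (fun k => by
        rw [coe_decompose_sub_decompose]
        split_ifs
        · exact zero_mem _
        · exact hb k)
      (fun r => by rw [sub_mul, sub_mul, h, hM', sub_zero])
    by_cases hk : k = M
    · rw [hk]; exact hM j r
    · simpa only [coe_decompose_sub_decompose, if_neg hk] using IH' k j r

theorem IsSemiprimeGradedIdeal.decompose_mem_perpSet (I : Ideal A) {a : A}
    (ha : a ∈ perpSet (I : Set A)) (haS : ∀ k, (decompose 𝒜 a k : A) ∈ S k) (k : ℤ) :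
    (decompose 𝒜 a k : A) ∈ perpSet (I : Set A) := by
  classical
  intro x hx
  have hcomp := hS.decompose_mul_mul_decompose_eq_zero haS
    (fun r => by rw [mul_assoc]; exact (ha _ (I.mul_mem_left r hx)).1) k
  rw [← sum_support_decompose 𝒜 x, Finset.mul_sum, Finset.sum_mul]
  refine ⟨Finset.sum_eq_zero fun j _ => ?_, Finset.sum_eq_zero fun j _ => ?_⟩
  · simpa using hcomp j 1
  · simpa using hS.mul_mul_eq_zero_swap (haS k) (SetLike.coe_mem _) (hcomp j) 1

end GradedSemiprime

theorem sum_smul_eq_zero_of_orthogonal_idempotents {R A ι : Type*} [Field R] [Ring A]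
    [Algebra R A] [DecidableEq ι] {q : ι → A} (hq : ∀ i j, q i * q j = if i = j then q i else 0)
    (s : Finset ι) (t : ι → R) (h : ∀ i, (∑ j ∈ s, t j • q j) * q i * ∑ j ∈ s, t j • q j = 0) :
    ∑ j ∈ s, t j • q j = 0 := by
  set c := ∑ j ∈ s, t j • q j
  have hqc : ∀ i ∈ s, q i * c = t i • q i := fun i hi => by
    simp only [c, Finset.mul_sum, mul_smul_comm, hq, smul_ite, smul_zero, Finset.sum_ite_eq, hi,
      if_true]
  have hcq : ∀ i ∈ s, c * q i = t i • q i := fun i hi => by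
    simp only [c, Finset.sum_mul, smul_mul_assoc, hq, smul_ite, smul_zero, Finset.sum_ite_eq', hi,
      if_true]
  refine Finset.sum_eq_zero fun i hi => ?_
  have hsq : (t i * t i) • q i = 0 := by
    rw [mul_smul, ← hqc i hi, ← smul_mul_assoc, ← hcq i hi, h]
  by_cases hti : t i = 0
  · rw [hti, zero_smul]
  · rw [← inv_smul_smul₀ hti (t i • q i), smul_smul (t i), hsq, smul_zero]

namespace DGraph

open scoped Classical
open AddMonoidAlgebra

variable {K : Type} [Field K] {G : DGraph}

@[simp] lemma pathElem_nil (u : G.V) : pathElem K G (Path.nil u) = vert K G u := rfl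

@[simp] lemma pathElem_cons (e : G.E) {w : G.V} (p : Path G (G.rng e) w) :
    pathElem K G (Path.cons e p) = edge K G e * pathElem K G p := rfl

@[simp] lemma pathElemStar_nil (u : G.V) : pathElemStar K G (Path.nil u) = vert K G u := rfl

@[simp] lemma pathElemStar_cons (e : G.E) {w : G.V} (p : Path G (G.rng e) w) :
    pathElemStar K G (Path.cons e p) = pathElemStar K G p * ghost K G e := rfl

@[simp] lemma Path.length_nil (u : G.V) : (Path.nil (G := G) u).length = 0 := rfl

@[simp] lemma Path.length_cons (e : G.E) {w : G.V} (p : Path G (G.rng e) w) :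
    (Path.cons e p).length = p.length + 1 := rfl

section Relations

private lemma mk_mul_mk_of_rel {x y z : FreeAlgebra K (LGen G)} (h : LRel K G (x * y) z) :
    RingQuot.mkAlgHom K (LRel K G) x * RingQuot.mkAlgHom K (LRel K G) y
      = RingQuot.mkAlgHom K (LRel K G) z := by
  rw [← map_mul]; exact RingQuot.mkAlgHom_rel K h

lemma vert_mul_vert (u w : G.V) :
    vert K G u * vert K G w = if u = w then vert K G u else 0 := by
  split_ifs with h
  · subst h; exact mk_mul_mk_of_rel (LRel.vert_idem u)
  · exact (mk_mul_mk_of_rel (LRel.vert_orth h)).trans (map_zero _)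

lemma vert_mul_edge (u : G.V) (e : G.E) :
    vert K G u * edge K G e = if u = G.src e then edge K G e else 0 := by
  have h : vert K G (G.src e) * edge K G e = edge K G e := mk_mul_mk_of_rel (LRel.src_edge e)
  split_ifs with hu
  · rw [hu, h]
  · rw [← h, ← mul_assoc, vert_mul_vert, if_neg hu, zero_mul]

lemma edge_mul_vert (e : G.E) (u : G.V) :
    edge K G e * vert K G u = if u = G.rng e then edge K G e else 0 := by
  have h : edge K G e * vert K G (G.rng e) = edge K G e := mk_mul_mk_of_rel (LRel.edge_rng e)
  split_ifs with hu
  · rw [hu, h]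
  · rw [← h, mul_assoc, vert_mul_vert, if_neg (Ne.symm hu), mul_zero]

lemma vert_mul_ghost (u : G.V) (e : G.E) :
    vert K G u * ghost K G e = if u = G.rng e then ghost K G e else 0 := by
  have h : vert K G (G.rng e) * ghost K G e = ghost K G e := mk_mul_mk_of_rel (LRel.rng_ghost e)
  split_ifs with hu
  · rw [hu, h]
  · rw [← h, ← mul_assoc, vert_mul_vert, if_neg hu, zero_mul]

lemma ghost_mul_vert (e : G.E) (u : G.V) :
    ghost K G e * vert K G u = if u = G.src e then ghost K G e else 0 := by
  have h : ghost K G e * vert K G (G.src e) = ghost K G e := mk_mul_mk_of_rel (LRel.ghost_src e)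
  split_ifs with hu
  · rw [hu, h]
  · rw [← h, mul_assoc, vert_mul_vert, if_neg (Ne.symm hu), mul_zero]

lemma ghost_mul_edge (e f : G.E) :
    ghost K G e * edge K G f = if e = f then vert K G (G.rng e) else 0 := by
  split_ifs with h
  · subst h; exact mk_mul_mk_of_rel (LRel.ck1 e)
  · exact (mk_mul_mk_of_rel (LRel.ck1_orth h)).trans (map_zero _)

lemma vert_eq_sum_edge_mul_ghost (u : G.V) (S : Finset G.E) (hS : S.Nonempty)
    (hsrc : ∀ e : G.E, G.src e = u ↔ e ∈ S) :
    vert K G u = ∑ e ∈ S, edge K G e * ghost K G e := by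
  rw [vert, RingQuot.mkAlgHom_rel K (LRel.ck2 u S hS hsrc), map_sum]
  simp only [map_mul]
  rfl

end Relations

section Paths

def Path.append : ∀ {u w w' : G.V}, Path G u w → Path G w w' → Path G u w'
  | _, _, _, .nil _, q => q
  | _, _, _, .cons e p, q => .cons e (p.append q)

@[simp] lemma Path.length_append {u w w' : G.V} (p : Path G u w) (q : Path G w w') :
    (p.append q).length = p.length + q.length := by
  induction p with
  | nil => simp [Path.append]
  | cons e p ih => simp [Path.append, ih]; omega

lemma vert_mul_pathElem {u w : G.V} (α : Path G u w) (x : G.V) :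
    vert K G x * pathElem K G α = if x = u then pathElem K G α else 0 := by
  cases α with
  | nil v => rw [pathElem_nil, vert_mul_vert]; split_ifs with h <;> simp [h]
  | cons e p => rw [pathElem_cons, ← mul_assoc, vert_mul_edge]; split_ifs <;> simp

lemma pathElem_mul_vert {u w : G.V} (α : Path G u w) (x : G.V) :
    pathElem K G α * vert K G x = if x = w then pathElem K G α else 0 := by
  induction α with
  | nil v => simp [vert_mul_vert, eq_comm]
  | cons e p ih => rw [pathElem_cons, mul_assoc, ih]; split_ifs <;> simp

lemma vert_mul_pathElemStar {u w : G.V} (β : Path G u w) (x : G.V) :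
    vert K G x * pathElemStar K G β = if x = w then pathElemStar K G β else 0 := by
  induction β with
  | nil v => rw [pathElemStar_nil, vert_mul_vert]; split_ifs with h <;> simp [h]
  | cons e p ih => rw [pathElemStar_cons, ← mul_assoc, ih]; split_ifs <;> simp

lemma pathElemStar_mul_vert {u w : G.V} (β : Path G u w) (x : G.V) :
    pathElemStar K G β * vert K G x = if x = u then pathElemStar K G β else 0 := by
  cases β with
  | nil v => simp [vert_mul_vert, eq_comm]
  | cons e p => rw [pathElemStar_cons, mul_assoc, ghost_mul_vert]; split_ifs <;> simp

lemma pathElem_append {u w w' : G.V} (p : Path G u w) (q : Path G w w') :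
    pathElem K G (p.append q) = pathElem K G p * pathElem K G q := by
  induction p with
  | nil => simp [Path.append, vert_mul_pathElem]
  | cons e p ih => simp [Path.append, ih, mul_assoc]

lemma pathElemStar_append {u w w' : G.V} (p : Path G u w) (q : Path G w w') :
    pathElemStar K G (p.append q) = pathElemStar K G q * pathElemStar K G p := by
  induction p with
  | nil => simp [Path.append, pathElemStar_mul_vert]
  | cons e p ih => simp [Path.append, ih, mul_assoc]

lemma pathElem_mul_pathElem_of_ne {u w a b : G.V} (α : Path G u w) (τ : Path G a b)
    (h : a ≠ w) : pathElem K G α * pathElem K G τ = 0 := by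
  have hα : pathElem K G α = pathElem K G α * vert K G w := by
    rw [pathElem_mul_vert, if_pos rfl]
  rw [hα, mul_assoc, vert_mul_pathElem, if_neg (Ne.symm h), mul_zero]

lemma pathElemStar_mul_pathElemStar_of_ne {u w a b : G.V} (ρ : Path G a b) (δ : Path G u w)
    (h : a ≠ w) : pathElemStar K G ρ * pathElemStar K G δ = 0 := by
  have hρ : pathElemStar K G ρ = pathElemStar K G ρ * vert K G a := by
    rw [pathElemStar_mul_vert, if_pos rfl]
  rw [hρ, mul_assoc, vert_mul_pathElemStar, if_neg h, mul_zero]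

end Paths

section Grading

lemma monomial_mem_grade {u u' w : G.V} (α : Path G u w) (β : Path G u' w) {n : ℤ}
    (h : (α.length : ℤ) - β.length = n) :
    pathElem K G α * pathElemStar K G β ∈ grade K G n :=
  Submodule.subset_span ⟨u, u', w, α, β, h, rfl⟩

lemma pathElem_mem_grade {u w : G.V} (α : Path G u w) :
    pathElem K G α ∈ grade K G α.length := by
  simpa [pathElem_mul_vert] using monomial_mem_grade (K := K) α (.nil w) (n := α.length)

lemma pathElemStar_mem_grade {u w : G.V} (β : Path G u w) :
    pathElemStar K G β ∈ grade K G (-β.length) := by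
  simpa [vert_mul_pathElemStar] using monomial_mem_grade (K := K) (.nil w) β (n := -β.length)

lemma vert_mem_grade (u : G.V) : vert K G u ∈ grade K G 0 :=
  pathElem_mem_grade (.nil u)

lemma edge_mem_grade (e : G.E) : edge K G e ∈ grade K G 1 := by
  simpa [vert_mul_vert, edge_mul_vert] using pathElem_mem_grade (K := K) (.cons e (.nil _))

lemma ghost_mem_grade (e : G.E) : ghost K G e ∈ grade K G (-1) := by
  simpa [vert_mul_vert, vert_mul_ghost] using pathElemStar_mem_grade (K := K) (.cons e (.nil _))

lemma pathElemStar_mul_pathElem_mem_grade {u w u' w' : G.V} (β : Path G u w)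
    (γ : Path G u' w') : pathElemStar K G β * pathElem K G γ ∈ grade K G (γ.length - β.length) := by
  induction β generalizing u' w' γ with
  | nil v =>
    rw [pathElemStar_nil, vert_mul_pathElem]
    split_ifs
    · simpa using pathElem_mem_grade γ
    · exact zero_mem _
  | cons f β ih =>
    cases γ with
    | nil v =>
      rw [pathElem_nil, pathElemStar_mul_vert]
      split_ifs
      · simpa using pathElemStar_mem_grade (K := K) (.cons f β)
      · exact zero_mem _
    | cons e γ =>
      rw [pathElemStar_cons, pathElem_cons, mul_assoc, ← mul_assoc (ghost K G f), ghost_mul_edge]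
      split_ifs with h
      · subst h
        rw [vert_mul_pathElem, if_pos rfl]
        simpa using ih γ
      · simp only [zero_mul, mul_zero, zero_mem]

lemma pathElem_mul_mul_pathElemStar_mem_grade {u w u' w' : G.V} (α : Path G u w)
    (δ : Path G u' w') {k : ℤ} {z : LPA K G} (hz : z ∈ grade K G k) :
    pathElem K G α * z * pathElemStar K G δ ∈ grade K G (α.length + k - δ.length) := by
  induction hz using Submodule.span_induction with
  | mem x hx =>
    obtain ⟨a, c, b, τ, ρ, hdeg, rfl⟩ := hx
    by_cases hτ : a = w
    · subst hτ
      by_cases hρ : c = w'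
      · subst hρ
        rw [show pathElem K G α * (pathElem K G τ * pathElemStar K G ρ) * pathElemStar K G δ
            = pathElem K G (α.append τ) * pathElemStar K G (δ.append ρ) by
          simp only [pathElem_append, pathElemStar_append, mul_assoc]]
        exact monomial_mem_grade _ _ (by simp; omega)
      · rw [mul_assoc, mul_assoc, pathElemStar_mul_pathElemStar_of_ne ρ δ hρ, mul_zero,
          mul_zero]
        exact zero_mem _
    · rw [← mul_assoc, pathElem_mul_pathElem_of_ne α τ hτ, zero_mul, zero_mul]
      exact zero_mem _
  | zero => simp
  | add x y _ _ hx hy => rw [mul_add, add_mul]; exact add_mem hx hy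
  | smul t x _ hx => rw [mul_smul_comm, smul_mul_assoc]; exact Submodule.smul_mem _ _ hx

lemma grade_mul_grade (m n : ℤ) : grade K G m * grade K G n ≤ grade K G (m + n) := by
  rw [grade, grade, Submodule.span_mul_span, Submodule.span_le]
  rintro _ ⟨_, ⟨_, _, _, α, β, rfl, rfl⟩, _, ⟨_, _, _, γ, δ, rfl, rfl⟩, rfl⟩
  dsimp only
  rw [show pathElem K G α * pathElemStar K G β * (pathElem K G γ * pathElemStar K G δ)
      = pathElem K G α * (pathElemStar K G β * pathElem K G γ) * pathElemStar K G δ by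
    simp only [mul_assoc]]
  have h := pathElem_mul_mul_pathElemStar_mem_grade (K := K) α δ
    (pathElemStar_mul_pathElem_mem_grade β γ)
  rwa [show (α.length : ℤ) + (γ.length - β.length) - δ.length
    = α.length - β.length + (γ.length - δ.length) by ring] at h

end Grading

section GradedAlgebra

-- The unit need not lie in the span of the monomials (it does not when `G.V` is infinite),
-- so the scalars are adjoined in degree `0`.
variable (K G) in
def unitalGrade (n : ℤ) : Submodule K (LPA K G) := grade K G n ⊔ if n = 0 then 1 else ⊥

lemma grade_le_unitalGrade (n : ℤ) : grade K G n ≤ unitalGrade K G n := le_sup_left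

lemma grade_mul_unitalGrade (m n : ℤ) :
    grade K G m * unitalGrade K G n ≤ grade K G (m + n) := by
  rw [unitalGrade, Submodule.mul_sup]
  refine sup_le (grade_mul_grade m n) ?_
  split_ifs with h
  · rw [h, Submodule.mul_one, add_zero]
  · rw [Submodule.mul_bot]; exact bot_le

lemma unitalGrade_mul_grade (m n : ℤ) :
    unitalGrade K G m * grade K G n ≤ grade K G (m + n) := by
  rw [unitalGrade, Submodule.sup_mul]
  refine sup_le (grade_mul_grade m n) ?_
  split_ifs with h
  · rw [h, Submodule.one_mul, zero_add]
  · rw [Submodule.bot_mul]; exact bot_le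

lemma unitalGrade_mul_unitalGrade (m n : ℤ) :
    unitalGrade K G m * unitalGrade K G n ≤ unitalGrade K G (m + n) := by
  nth_rewrite 1 [unitalGrade]
  rw [Submodule.sup_mul]
  refine sup_le ((grade_mul_unitalGrade m n).trans (grade_le_unitalGrade _)) ?_
  split_ifs with h
  · rw [h, Submodule.one_mul, zero_add]
  · rw [Submodule.bot_mul]; exact bot_le

instance : SetLike.GradedMonoid (unitalGrade K G) where
  one_mem := Submodule.mem_sup_right (by simp [Submodule.one_le.mp le_rfl])
  mul_mem m n _ _ hx hy := unitalGrade_mul_unitalGrade m n (Submodule.mul_mem_mul hx hy)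

-- `theta z = Σₙ zₙ tⁿ` in `L[t, t⁻¹]` with `L = LPA K G`; it is well defined because the
-- defining relations are homogeneous.
variable (K G) in
noncomputable def thetaGen : LGen G → AddMonoidAlgebra (LPA K G) ℤ
  | .v u => single 0 (vert K G u)
  | .e e => single 1 (edge K G e)
  | .g e => single (-1) (ghost K G e)

lemma thetaGen_rel ⦃x y : FreeAlgebra K (LGen G)⦄ (h : LRel K G x y) :
    FreeAlgebra.lift K (thetaGen K G) x = FreeAlgebra.lift K (thetaGen K G) y := by
  induction h with
  | ck2 u S hS hsrc =>
    simp only [map_sum, map_mul, FreeAlgebra.lift_ι_apply, thetaGen, single_mul_single,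
      add_neg_cancel]
    rw [vert_eq_sum_edge_mul_ghost u S hS hsrc]
    exact map_sum (singleAddHom 0) _ S
  | _ => simp only [map_mul, map_zero, FreeAlgebra.lift_ι_apply, thetaGen, single_mul_single,
      vert_mul_vert, vert_mul_edge, edge_mul_vert, vert_mul_ghost, ghost_mul_vert, ghost_mul_edge,
      add_zero, zero_add, neg_add_cancel, ↓reduceIte, single_zero, *]

variable (K G) in
noncomputable def theta : LPA K G →ₐ[K] AddMonoidAlgebra (LPA K G) ℤ :=
  RingQuot.liftAlgHom K ⟨FreeAlgebra.lift K (thetaGen K G), thetaGen_rel⟩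

lemma theta_mkAlgHom_ι (x : LGen G) :
    theta K G (RingQuot.mkAlgHom K (LRel K G) (FreeAlgebra.ι K x)) = thetaGen K G x :=
  (RingQuot.liftAlgHom_mkAlgHom_apply K _ thetaGen_rel _).trans (FreeAlgebra.lift_ι_apply _ _)

lemma theta_vert (u : G.V) : theta K G (vert K G u) = single 0 (vert K G u) :=
  theta_mkAlgHom_ι (.v u)

lemma theta_edge (e : G.E) : theta K G (edge K G e) = single 1 (edge K G e) :=
  theta_mkAlgHom_ι (.e e)

lemma theta_ghost (e : G.E) : theta K G (ghost K G e) = single (-1) (ghost K G e) :=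
  theta_mkAlgHom_ι (.g e)

lemma theta_pathElem {u w : G.V} (α : Path G u w) :
    theta K G (pathElem K G α) = single (α.length : ℤ) (pathElem K G α) := by
  induction α with
  | nil v => exact theta_vert v
  | cons e p ih =>
    rw [pathElem_cons, map_mul, theta_edge, ih, single_mul_single, Path.length_cons,
      Nat.cast_succ, add_comm]

lemma theta_pathElemStar {u w : G.V} (β : Path G u w) :
    theta K G (pathElemStar K G β) = single (-β.length : ℤ) (pathElemStar K G β) := by
  induction β with
  | nil v => exact theta_vert v
  | cons e p ih =>
    rw [pathElemStar_cons, map_mul, theta_ghost, ih, single_mul_single, Path.length_cons,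
      Nat.cast_succ, neg_add]

lemma unitalGrade_le_eqLocus_theta (n : ℤ) :
    unitalGrade K G n ≤ LinearMap.eqLocus (theta K G).toLinearMap (lsingle n) := by
  refine sup_le (Submodule.span_le.mpr ?_) ?_
  · rintro _ ⟨_, _, _, α, β, rfl, rfl⟩
    rw [SetLike.mem_coe, LinearMap.mem_eqLocus, AlgHom.toLinearMap_apply, lsingle_apply,
      map_mul, theta_pathElem, theta_pathElemStar, single_mul_single, sub_eq_add_neg]
  · split_ifs with h
    · subst h
      rw [Submodule.one_le, LinearMap.mem_eqLocus, AlgHom.toLinearMap_apply, lsingle_apply,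
        map_one, AddMonoidAlgebra.one_def]
    · exact bot_le

lemma theta_of_mem_unitalGrade {n : ℤ} {x : LPA K G} (hx : x ∈ unitalGrade K G n) :
    theta K G x = single n x :=
  unitalGrade_le_eqLocus_theta n hx

lemma coeff_theta_coeAlgHom (y : ⨁ i, unitalGrade K G i) (n : ℤ) :
    (theta K G (DirectSum.coeAlgHom (unitalGrade K G) y)).coeff n = y n := by
  induction y using DirectSum.induction_on with
  | zero => simp
  | of i x =>
    rw [DirectSum.coeAlgHom_of, theta_of_mem_unitalGrade x.2, coeff_single, DirectSum.of_apply,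
      Finsupp.single_apply]
    split_ifs with h
    · subst h; rfl
    · rfl
  | add y y' hy hy' => simp [hy, hy']

lemma coeAlgHom_unitalGrade_surjective :
    Function.Surjective (DirectSum.coeAlgHom (unitalGrade K G)) := by
  intro z
  change z ∈ (DirectSum.coeAlgHom (unitalGrade K G)).range
  obtain ⟨x, rfl⟩ := RingQuot.mkAlgHom_surjective K (LRel K G) z
  induction x using FreeAlgebra.induction with
  | grade0 r => rw [AlgHom.commutes]; exact Subalgebra.algebraMap_mem _ r
  | grade1 x =>
    have hx : ∃ n, RingQuot.mkAlgHom K (LRel K G) (FreeAlgebra.ι K x) ∈ unitalGrade K G n := by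
      cases x with
      | v u => exact ⟨0, grade_le_unitalGrade _ (vert_mem_grade u)⟩
      | e e => exact ⟨1, grade_le_unitalGrade _ (edge_mem_grade e)⟩
      | g e => exact ⟨-1, grade_le_unitalGrade _ (ghost_mem_grade e)⟩
    obtain ⟨n, hn⟩ := hx
    exact ⟨DirectSum.of _ n ⟨_, hn⟩, DirectSum.coeAlgHom_of _ _ _⟩
  | mul a b ha hb => rw [map_mul]; exact mul_mem ha hb
  | add a b ha hb => rw [map_add]; exact add_mem ha hb

lemma unitalGrade_isInternal : DirectSum.IsInternal (unitalGrade K G) := by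
  refine ⟨fun y y' h => DFinsupp.ext fun n => ?_, coeAlgHom_unitalGrade_surjective⟩
  refine Subtype.ext ?_
  rw [← coeff_theta_coeAlgHom, ← coeff_theta_coeAlgHom]
  exact congrArg (fun z => (theta K G z).coeff n) h

noncomputable instance : GradedAlgebra (unitalGrade K G) where
  __ := unitalGrade_isInternal.chooseDecomposition

end GradedAlgebra

section EdgeProj

variable (K G) in
noncomputable def edgeProj (F : Finset G.E) : LPA K G := ∑ e ∈ F, edge K G e * ghost K G e

lemma edgeProj_mul_edge {F : Finset G.E} {e : G.E} (he : e ∈ F) :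
    edgeProj K G F * edge K G e = edge K G e := by
  rw [edgeProj, Finset.sum_mul, Finset.sum_eq_single e]
  · rw [mul_assoc, ghost_mul_edge, if_pos rfl, edge_mul_vert, if_pos rfl]
  · intro f _ hf
    rw [mul_assoc, ghost_mul_edge, if_neg hf, mul_zero]
  · exact fun h => absurd he h

lemma ghost_mul_edgeProj {F : Finset G.E} {e : G.E} (he : e ∈ F) :
    ghost K G e * edgeProj K G F = ghost K G e := by
  rw [edgeProj, Finset.mul_sum, Finset.sum_eq_single e]
  · rw [← mul_assoc, ghost_mul_edge, if_pos rfl, vert_mul_ghost, if_pos rfl]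
  · intro f _ hf
    rw [← mul_assoc, ghost_mul_edge, if_neg (Ne.symm hf), zero_mul]
  · exact fun h => absurd he h

lemma edgeProj_mul_edgeProj_of_subset {F F' : Finset G.E} (h : F ⊆ F') :
    edgeProj K G F' * edgeProj K G F = edgeProj K G F := by
  rw [show edgeProj K G F = ∑ e ∈ F, edge K G e * ghost K G e from rfl, Finset.mul_sum]
  exact Finset.sum_congr rfl fun e he => by rw [← mul_assoc, edgeProj_mul_edge (h he)]

lemma edgeProj_mul_edgeProj_of_subset' {F F' : Finset G.E} (h : F ⊆ F') :
    edgeProj K G F * edgeProj K G F' = edgeProj K G F := by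
  rw [show edgeProj K G F = ∑ e ∈ F, edge K G e * ghost K G e from rfl, Finset.sum_mul]
  exact Finset.sum_congr rfl fun e he => by rw [mul_assoc, ghost_mul_edgeProj (h he)]

lemma edgeProj_mul_self (F : Finset G.E) : edgeProj K G F * edgeProj K G F = edgeProj K G F :=
  edgeProj_mul_edgeProj_of_subset subset_rfl

lemma vert_mul_edgeProj (u : G.V) (F : Finset G.E) :
    vert K G u * edgeProj K G F = edgeProj K G F * vert K G u := by
  rw [edgeProj, Finset.mul_sum, Finset.sum_mul]
  refine Finset.sum_congr rfl fun e _ => ?_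
  rw [← mul_assoc, vert_mul_edge, mul_assoc, ghost_mul_vert]
  split_ifs <;> simp

lemma edgeProj_mul_mul_edgeProj (F : Finset G.E) (c : LPA K G) :
    edgeProj K G F * c * edgeProj K G F =
      ∑ e ∈ F, ∑ f ∈ F, edge K G e * (ghost K G e * c * edge K G f) * ghost K G f := by
  simp only [edgeProj, Finset.sum_mul, Finset.mul_sum, mul_assoc]
  exact Finset.sum_comm

variable (K G) in
def leftAbsorbed : Submodule K (LPA K G) where
  carrier := {y | ∃ F, edgeProj K G F * y = y}
  zero_mem' := ⟨∅, mul_zero _⟩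
  add_mem' := by
    rintro y y' ⟨F, hF⟩ ⟨F', hF'⟩
    refine ⟨F ∪ F', ?_⟩
    conv_lhs => rw [← hF, ← hF']
    rw [mul_add, ← mul_assoc, ← mul_assoc,
      edgeProj_mul_edgeProj_of_subset Finset.subset_union_left,
      edgeProj_mul_edgeProj_of_subset Finset.subset_union_right, hF, hF']
  smul_mem' := by
    rintro t y ⟨F, hF⟩
    exact ⟨F, by rw [mul_smul_comm, hF]⟩

variable (K G) in
def rightAbsorbed : Submodule K (LPA K G) where
  carrier := {y | ∃ F, y * edgeProj K G F = y}
  zero_mem' := ⟨∅, zero_mul _⟩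
  add_mem' := by
    rintro y y' ⟨F, hF⟩ ⟨F', hF'⟩
    refine ⟨F ∪ F', ?_⟩
    conv_lhs => rw [← hF, ← hF']
    rw [add_mul, mul_assoc, mul_assoc,
      edgeProj_mul_edgeProj_of_subset' Finset.subset_union_left,
      edgeProj_mul_edgeProj_of_subset' Finset.subset_union_right, hF, hF']
  smul_mem' := by
    rintro t y ⟨F, hF⟩
    exact ⟨F, by rw [smul_mul_assoc, hF]⟩

lemma exists_edgeProj_mul_mul_edgeProj_eq {y : LPA K G} (hl : y ∈ leftAbsorbed K G)
    (hr : y ∈ rightAbsorbed K G) : ∃ F, edgeProj K G F * y * edgeProj K G F = y := by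
  obtain ⟨F, hF⟩ := hl
  obtain ⟨F', hF'⟩ := hr
  refine ⟨F ∪ F', ?_⟩
  conv_lhs => rw [← hF, ← hF']
  rw [← mul_assoc, edgeProj_mul_edgeProj_of_subset Finset.subset_union_left, mul_assoc,
    mul_assoc, edgeProj_mul_edgeProj_of_subset' Finset.subset_union_right, ← mul_assoc, hF, hF']

lemma monomial_mem_leftAbsorbed {u u' w : G.V} (α : Path G u w) (β : Path G u' w)
    (hα : α.length ≠ 0) : pathElem K G α * pathElemStar K G β ∈ leftAbsorbed K G := by
  cases α with
  | nil => exact absurd rfl hα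
  | cons e p =>
    exact ⟨{e}, by
      rw [pathElem_cons, ← mul_assoc, ← mul_assoc,
        edgeProj_mul_edge (Finset.mem_singleton_self e)]⟩

lemma monomial_mem_rightAbsorbed {u u' w : G.V} (α : Path G u w) (β : Path G u' w)
    (hβ : β.length ≠ 0) : pathElem K G α * pathElemStar K G β ∈ rightAbsorbed K G := by
  cases β with
  | nil => exact absurd rfl hβ
  | cons e p =>
    exact ⟨{e}, by
      rw [pathElemStar_cons, mul_assoc, mul_assoc,
        ghost_mul_edgeProj (Finset.mem_singleton_self e)]⟩

lemma grade_le_leftAbsorbed {d : ℤ} (hd : 0 < d) : grade K G d ≤ leftAbsorbed K G :=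
  Submodule.span_le.mpr <| by
    rintro _ ⟨_, _, _, α, β, hαβ, rfl⟩
    exact monomial_mem_leftAbsorbed α β (by omega)

lemma grade_le_rightAbsorbed {d : ℤ} (hd : d < 0) : grade K G d ≤ rightAbsorbed K G :=
  Submodule.span_le.mpr <| by
    rintro _ ⟨_, _, _, α, β, hαβ, rfl⟩
    exact monomial_mem_rightAbsorbed α β (by omega)

end EdgeProj

section Semiprime

variable (K G) in
def balancedSpan (n : ℕ) : Submodule K (LPA K G) :=
  Submodule.span K {x | ∃ (u u' w : G.V) (α : Path G u w) (β : Path G u' w),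
    α.length = β.length ∧ α.length ≤ n ∧ x = pathElem K G α * pathElemStar K G β}

lemma balancedSpan_mono : Monotone (balancedSpan K G) := fun _ _ hmn =>
  Submodule.span_mono <| by
    rintro _ ⟨u, u', w, α, β, hl, hn, rfl⟩
    exact ⟨u, u', w, α, β, hl, hn.trans hmn, rfl⟩

lemma exists_mem_balancedSpan {c : LPA K G} (hc : c ∈ grade K G 0) :
    ∃ n, c ∈ balancedSpan K G n := by
  refine (Submodule.mem_iSup_of_directed _ balancedSpan_mono.directed_le).mp ?_
  refine (Submodule.span_le.mpr ?_ : grade K G 0 ≤ _) hc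
  rintro _ ⟨u, u', w, α, β, hαβ, rfl⟩
  exact Submodule.mem_iSup_of_mem α.length
    (Submodule.subset_span ⟨u, u', w, α, β, by omega, le_rfl, rfl⟩)

lemma vert_mem_balancedSpan (u : G.V) (n : ℕ) : vert K G u ∈ balancedSpan K G n :=
  Submodule.subset_span ⟨u, u, u, .nil u, .nil u, rfl, Nat.zero_le _, by simp [vert_mul_vert]⟩

lemma ghost_mul_mul_edge_mem_balancedSpan {n : ℕ} {c : LPA K G}
    (hc : c ∈ balancedSpan K G (n + 1)) (e f : G.E) :
    ghost K G e * c * edge K G f ∈ balancedSpan K G n := by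
  induction hc using Submodule.span_induction with
  | mem x hx =>
    obtain ⟨u, u', w, α, β, hl, hn, rfl⟩ := hx
    cases α with
    | nil =>
      cases β with
      | nil =>
        rw [pathElem_nil, pathElemStar_nil, vert_mul_vert, if_pos rfl, ghost_mul_vert]
        split_ifs
        · rw [ghost_mul_edge]
          split_ifs
          · exact vert_mem_balancedSpan _ _
          · exact zero_mem _
        · rw [zero_mul]; exact zero_mem _
      | cons => simp at hl
    | cons e' α' =>
      cases β with
      | nil => simp at hl
      | cons f' β' =>
        rw [pathElem_cons, pathElemStar_cons,
          show ghost K G e * (edge K G e' * pathElem K G α' * (pathElemStar K G β' * ghost K G f'))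
              * edge K G f = ghost K G e * edge K G e' * (pathElem K G α' * pathElemStar K G β')
              * (ghost K G f' * edge K G f) by simp only [mul_assoc],
          ghost_mul_edge, ghost_mul_edge]
        split_ifs with h₁ h₂
        · subst h₁ h₂
          rw [← mul_assoc, vert_mul_pathElem, if_pos rfl, mul_assoc, pathElemStar_mul_vert,
            if_pos rfl]
          simp only [Path.length_cons, add_left_inj] at hl hn
          exact Submodule.subset_span ⟨_, _, _, α', β', hl, by omega, rfl⟩
        all_goals simp
  | zero => simp
  | add x y _ _ hx hy => rw [mul_add, add_mul]; exact add_mem hx hy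
  | smul t x _ hx => rw [mul_smul_comm, smul_mul_assoc]; exact Submodule.smul_mem _ _ hx

lemma balancedSpan_zero_le : balancedSpan K G 0 ≤ Submodule.span K (Set.range (vert K G)) :=
  Submodule.span_le.mpr <| by
    rintro _ ⟨u, u', w, α, β, hl, hn, rfl⟩
    cases α with
    | nil =>
      cases β with
      | nil => exact Submodule.subset_span ⟨u, by simp [vert_mul_vert]⟩
      | cons => simp at hl
    | cons => simp at hn

lemma balancedSpan_le (n : ℕ) : balancedSpan K G n ≤
    Submodule.span K (Set.range (vert K G)) ⊔ (leftAbsorbed K G ⊓ rightAbsorbed K G) :=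
  Submodule.span_le.mpr <| by
    rintro _ ⟨u, u', w, α, β, hl, hn, rfl⟩
    cases α with
    | nil =>
      cases β with
      | nil => exact Submodule.mem_sup_left (Submodule.subset_span ⟨u, by simp [vert_mul_vert]⟩)
      | cons => simp at hl
    | cons e α' =>
      exact Submodule.mem_sup_right
        ⟨monomial_mem_leftAbsorbed _ _ (by simp),
          monomial_mem_rightAbsorbed _ _ (by simp at hl ⊢; omega)⟩

lemma vert_mul_one_sub_edgeProj_mul_self (F : Finset G.E) (u w : G.V) :
    vert K G u * (1 - edgeProj K G F) * (vert K G w * (1 - edgeProj K G F)) =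
      if u = w then vert K G u * (1 - edgeProj K G F) else 0 := by
  have hcomm : (1 - edgeProj K G F) * vert K G w = vert K G w * (1 - edgeProj K G F) := by
    rw [sub_mul, mul_sub, one_mul, mul_one, vert_mul_edgeProj]
  have hidem : (1 - edgeProj K G F) * (1 - edgeProj K G F) = 1 - edgeProj K G F := by
    rw [sub_mul, mul_sub, mul_sub, edgeProj_mul_self]; noncomm_ring
  calc vert K G u * (1 - edgeProj K G F) * (vert K G w * (1 - edgeProj K G F))
      = vert K G u * ((1 - edgeProj K G F) * vert K G w) * (1 - edgeProj K G F) := by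
        simp only [mul_assoc]
    _ = vert K G u * vert K G w * (1 - edgeProj K G F) := by
        rw [hcomm, mul_assoc, mul_assoc, hidem, mul_assoc]
    _ = _ := by rw [vert_mul_vert]; split_ifs <;> simp

lemma eq_zero_of_mem_balancedSpan (n : ℕ) {c : LPA K G} (hc : c ∈ balancedSpan K G n)
    (h : ∀ r, c * r * c = 0) : c = 0 := by
  induction n generalizing c with
  | zero =>
    obtain ⟨t, rfl⟩ := Finsupp.mem_span_range_iff_exists_finsupp.mp (balancedSpan_zero_le hc)
    exact sum_smul_eq_zero_of_orthogonal_idempotents vert_mul_vert _ _ fun w => h _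
  | succ n ih =>
    obtain ⟨c₀, hc₀, c', hc', rfl⟩ := Submodule.mem_sup.mp (balancedSpan_le _ hc)
    obtain ⟨t, rfl⟩ := Finsupp.mem_span_range_iff_exists_finsupp.mp hc₀
    obtain ⟨F, hF⟩ := exists_edgeProj_mul_mul_edgeProj_eq hc'.1 hc'.2
    set E := edgeProj K G F
    set c₀ := t.sum fun w s => s • vert K G w
    have hmid : E * (c₀ + c') * E = 0 := by
      rw [edgeProj_mul_mul_edgeProj]
      refine Finset.sum_eq_zero fun e _ => Finset.sum_eq_zero fun f _ => ?_
      rw [ih (ghost_mul_mul_edge_mem_balancedSpan hc e f) fun r => ?_, mul_zero, zero_mul]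
      calc ghost K G e * (c₀ + c') * edge K G f * r * (ghost K G e * (c₀ + c') * edge K G f)
          = ghost K G e * ((c₀ + c') * (edge K G f * r * ghost K G e) * (c₀ + c')) *
              edge K G f := by simp only [mul_assoc]
        _ = 0 := by rw [h, mul_zero, zero_mul]
    have hc' : c' = -(E * c₀ * E) := by
      rw [← hF, eq_neg_iff_add_eq_zero, add_comm, ← add_mul, ← mul_add, hmid]
    have hsum : c₀ + c' = t.sum fun w s => s • (vert K G w * (1 - E)) := by
      rw [hc', ← sub_eq_add_neg]
      simp only [c₀, Finsupp.sum, Finset.mul_sum, Finset.sum_mul, ← Finset.sum_sub_distrib]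
      refine Finset.sum_congr rfl fun w _ => ?_
      rw [mul_smul_comm, smul_mul_assoc, ← smul_sub, mul_sub, mul_one, ← vert_mul_edgeProj,
        mul_assoc, edgeProj_mul_self]
    rw [hsum] at h ⊢
    exact sum_smul_eq_zero_of_orthogonal_idempotents (vert_mul_one_sub_edgeProj_mul_self F) _ _
      fun w => h _

theorem eq_zero_of_mem_grade {d : ℤ} {c : LPA K G} (hc : c ∈ grade K G d)
    (h : ∀ r, c * r * c = 0) : c = 0 := by
  induction d using Int.induction_on generalizing c with
  | zero =>
    obtain ⟨n, hn⟩ := exists_mem_balancedSpan hc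
    exact eq_zero_of_mem_balancedSpan n hn h
  | succ i ih =>
    obtain ⟨F, hF⟩ := grade_le_leftAbsorbed (by omega) hc
    have hgc : ∀ e, ghost K G e * c = 0 := fun e => by
      have hmem := grade_mul_grade (K := K) (G := G) _ _
        (Submodule.mul_mem_mul (ghost_mem_grade e) hc)
      rw [show (-1 : ℤ) + (i + 1) = i by ring] at hmem
      refine ih hmem fun r => ?_
      calc ghost K G e * c * r * (ghost K G e * c) = ghost K G e * (c * (r * ghost K G e) * c) := by
            simp only [mul_assoc]
        _ = 0 := by rw [h, mul_zero]
    rw [← hF, edgeProj, Finset.sum_mul]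
    exact Finset.sum_eq_zero fun e _ => by rw [mul_assoc, hgc, mul_zero]
  | pred i ih =>
    obtain ⟨F, hF⟩ := grade_le_rightAbsorbed (by omega) hc
    have hce : ∀ e, c * edge K G e = 0 := fun e => by
      have hmem := grade_mul_grade (K := K) (G := G) _ _
        (Submodule.mul_mem_mul hc (edge_mem_grade e))
      rw [sub_add_cancel] at hmem
      refine ih hmem fun r => ?_
      calc c * edge K G e * r * (c * edge K G e) = c * (edge K G e * r) * c * edge K G e := by
            simp only [mul_assoc]
        _ = 0 := by rw [h, zero_mul]
    rw [← hF, edgeProj, Finset.mul_sum]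
    exact Finset.sum_eq_zero fun e _ => by rw [← mul_assoc, hce, zero_mul]

end Semiprime

lemma isSemiprimeGradedIdeal_grade : IsSemiprimeGradedIdeal (unitalGrade K G) (grade K G) where
  mul_mem_left ha hb := unitalGrade_mul_grade _ _ (Submodule.mul_mem_mul ha hb)
  mul_mem_right ha hb := grade_mul_unitalGrade _ _ (Submodule.mul_mem_mul ha hb)
  eq_zero_of_mul_mul_self := eq_zero_of_mem_grade

end DGraph

open DGraph in
/-- For an arbitrary graph `E` and any ideal `I` of `L_K(E)`, the annihilator `I^⊥`
is a ℤ-graded ideal of `L_K(E)`. -/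
theorem perp_isGraded (K : Type) [Field K] (G : DGraph) (I : TwoSidedIdeal (LPA K G)) :
    ∃ P : TwoSidedIdeal (LPA K G), (P : Set (LPA K G)) = perpSet (I : Set (LPA K G)) ∧
      IsGradedIdeal K G P := by
  refine ⟨perpIdeal I, coe_perpIdeal I, fun f hf hsum n => ?_⟩
  have hcomp (k : ℤ) : (DirectSum.decompose (unitalGrade K G) (f.sum fun _ x => x) k :
      LPA K G) = f k :=
    coe_decompose_finsuppSum _ (fun k => grade_le_unitalGrade k (hf k)) k
  rw [← SetLike.mem_coe, coe_perpIdeal] at hsum ⊢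
  rw [← hcomp n]
  exact isSemiprimeGradedIdeal_grade.decompose_mem_perpSet (TwoSidedIdeal.asIdeal I) hsum
    (fun k => (hcomp k).symm ▸ hf k) n
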